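/- Let n ≥ 2, let m_1, …, m_n be positive real numbers, and fix k₁ ∈ {1, …, n−1}. Let q_1, …, q_{n-1} ∈ ℝ² be pairwise distinct points, define q_n = −(1/m_n) · Σ_{i=1}^{n-1} m_i q_i, and assume q_n ≠ q_i for i = 1, …, n−1. Suppose that: (i) for every i ∈ {1, …, n−1} with i ≠ k₁, q_i = Σ_{j≠i} (m_j / |q_i − q_j|³)(q_i − q_j); (ii) the first (x) component of the equation holds for body k₁, i.e. x_{k₁} = Σ_{j≠k₁} (m_j / |q_{k₁} − q_j|³)(x_{k₁} − x_j); and (iii) x_{k₁} ≠ x_n, where x_i denotes the first coordinate of q_i. Then (q_1, …, q_n) is a normalized central configuration, i.e. q_i = Σ_{j≠i} (m_j / |q_i − q_j|³)(q_i − q_j) holds for every i = 1, …, n. -/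

import Mathlib

/-!
The mutual forces `m_i m_j (q_i - q_j) / |q_i - q_j|³` are antisymmetric in `(i, j)` and parallel
to `q_i - q_j`, so their total and their total torque vanish. Hence the weighted residuals
`r_i = m_i (q_i - Σ_{j ≠ i} m_j (q_i - q_j) / |q_i - q_j|³)` satisfy `Σ r_i = 0` (using the center
of mass condition) and `Σ q_i × r_i = 0`. The reduced system kills every residual except those of
body `k₁` and of the last body, so `r_last = -r_{k₁}` and `(q_{k₁} - q_last) × r_{k₁} = 0`. Since
`r_{k₁}` has zero `x`-component and `x_{k₁} ≠ x_last`, this forces `r_{k₁} = 0`.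
-/

open Finset

abbrev E2 : Type := EuclideanSpace ℝ (Fin 2)

theorem Finset.sum_sum_eq_zero_of_antisymm {ι M : Type*} [Fintype ι] [AddCommMonoid M]
    (f : ι → ι → M) (hswap : ∀ i j, f i j + f j i = 0) (hdiag : ∀ i, f i i = 0) :
    ∑ i, ∑ j, f i j = 0 := by
  rw [← Fintype.sum_prod_type']
  refine sum_involution (fun p _ => p.swap) (fun p _ => hswap p.1 p.2) (fun p _ hp hfix => ?_)
    (fun _ _ => mem_univ _) (fun p _ => p.swap_swap)
  obtain ⟨i, j⟩ := p
  obtain rfl : i = j := congrArg Prod.fst hfix.symm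
  exact hp (hdiag i)

noncomputable section NewtonianForces

variable {ι V : Type*} [SeminormedAddCommGroup V] [Module ℝ V] (m : ι → ℝ) (q : ι → V)

def pairForce (i j : ι) : V :=
  (m i * m j / ‖q i - q j‖ ^ 3) • (q i - q j)

theorem pairForce_swap (i j : ι) : pairForce m q j i = -pairForce m q i j := by
  rw [pairForce, pairForce, norm_sub_rev, mul_comm (m j), ← neg_sub (q i), smul_neg]

theorem pairForce_self (i : ι) : pairForce m q i i = 0 := by
  simp [pairForce]

variable [Fintype ι] [DecidableEq ι]

def newtonField (i : ι) : V :=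
  ∑ j ∈ univ.filter (· ≠ i), (m j / ‖q i - q j‖ ^ 3) • (q i - q j)

theorem smul_newtonField (i : ι) : m i • newtonField m q i = ∑ j, pairForce m q i j := by
  rw [newtonField, smul_sum, ← sum_filter_add_sum_filter_not univ (· ≠ i)]
  have hrest : ∑ j ∈ univ.filter (fun j => ¬ j ≠ i), pairForce m q i j = 0 := by
    refine sum_eq_zero fun j hj => ?_
    rw [of_not_not (mem_filter.mp hj).2, pairForce_self]
  rw [hrest, add_zero]
  refine sum_congr rfl fun j _ => ?_
  rw [smul_smul, mul_div_assoc', pairForce]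

theorem sum_smul_newtonField : ∑ i, m i • newtonField m q i = 0 := by
  simp_rw [smul_newtonField]
  exact sum_sum_eq_zero_of_antisymm _ (fun i j => by rw [pairForce_swap, neg_add_cancel])
    (pairForce_self m q)

theorem sum_bilin_smul_newtonField {B : V →ₗ[ℝ] V →ₗ[ℝ] ℝ} (hB : B.IsAlt) :
    ∑ i, B (q i) (m i • newtonField m q i) = 0 := by
  simp_rw [smul_newtonField, map_sum]
  refine sum_sum_eq_zero_of_antisymm _ (fun i j => ?_) (fun i => by rw [pairForce_self, map_zero])
  rw [pairForce_swap, map_neg, pairForce, map_smul, map_smul, map_sub, map_sub, hB, hB,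
    ← hB.neg (q j), smul_eq_mul, smul_eq_mul]
  ring

def ccResidual (i : ι) : V := m i • (q i - newtonField m q i)

theorem sum_ccResidual (hcom : ∑ i, m i • q i = 0) : ∑ i, ccResidual m q i = 0 := by
  simp_rw [ccResidual, smul_sub, sum_sub_distrib, hcom, sum_smul_newtonField, sub_zero]

theorem sum_bilin_ccResidual {B : V →ₗ[ℝ] V →ₗ[ℝ] ℝ} (hB : B.IsAlt) :
    ∑ i, B (q i) (ccResidual m q i) = 0 := by
  have hterm (i : ι) : B (q i) (ccResidual m q i) = -B (q i) (m i • newtonField m q i) := by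
    rw [ccResidual, smul_sub, map_sub, map_smul (B (q i)) (m i) (q i), hB, smul_zero, zero_sub]
  rw [sum_congr rfl fun i _ => hterm i, sum_neg_distrib, sum_bilin_smul_newtonField m q hB,
    neg_zero]

theorem ccResidual_eq_zero_iff {i : ι} (hi : m i ≠ 0) :
    ccResidual m q i = 0 ↔ q i = newtonField m q i := by
  rw [ccResidual, smul_eq_zero, sub_eq_zero, or_iff_right hi]

end NewtonianForces

theorem eq_neg_and_bilin_sub_eq_zero_of_sum_eq_zero {ι V : Type*} [Fintype ι]
    [AddCommGroup V] [Module ℝ V] {B : V →ₗ[ℝ] V →ₗ[ℝ] ℝ} (q r : ι → V) {a b : ι}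
    (hab : a ≠ b) (hsupp : ∀ i, i ≠ a ∧ i ≠ b → r i = 0) (hsum : ∑ i, r i = 0)
    (hbilin : ∑ i, B (q i) (r i) = 0) :
    r b = -r a ∧ B (q a - q b) (r a) = 0 := by
  rw [Fintype.sum_eq_add a b hab hsupp] at hsum
  have hrb : r b = -r a := eq_neg_of_add_eq_zero_right hsum
  rw [Fintype.sum_eq_add a b hab fun i hi => by rw [hsupp i hi, map_zero], hrb, map_neg,
    ← sub_eq_add_neg, ← LinearMap.sub_apply, ← map_sub] at hbilin
  exact ⟨hrb, hbilin⟩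

def planarCross : E2 →ₗ[ℝ] E2 →ₗ[ℝ] ℝ :=
  LinearMap.mk₂ ℝ (fun u v => u 0 * v 1 - u 1 * v 0)
    (fun _ _ _ => by simp only [PiLp.add_apply]; ring)
    (fun _ _ _ => by simp only [PiLp.smul_apply, smul_eq_mul]; ring)
    (fun _ _ _ => by simp only [PiLp.add_apply]; ring)
    (fun _ _ _ => by simp only [PiLp.smul_apply, smul_eq_mul]; ring)

theorem planarCross_apply (u v : E2) : planarCross u v = u 0 * v 1 - u 1 * v 0 := rfl

theorem planarCross_isAlt : planarCross.IsAlt := fun u => by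
  rw [planarCross_apply, mul_comm, sub_self]

theorem eq_zero_of_planarCross_eq_zero {u v : E2} (hcross : planarCross u v = 0) (hu : u 0 ≠ 0)
    (hv : v 0 = 0) : v = 0 := by
  rw [planarCross_apply, hv, mul_zero, sub_zero, mul_eq_zero, or_iff_right hu] at hcross
  ext c
  fin_cases c
  · exact hv
  · exact hcross

theorem stmt2 (n : ℕ) (m : Fin (n + 1) → ℝ) (hm : ∀ i, 0 < m i)
    (k₁ : Fin n)
    (q : Fin (n + 1) → E2)
    (hlast : q (Fin.last n) = (-(m (Fin.last n))⁻¹) • ∑ i : Fin n, m i.castSucc • q i.castSucc)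
    (heq : ∀ i : Fin n, i ≠ k₁ →
      q i.castSucc = ∑ j ∈ Finset.univ.filter (· ≠ i.castSucc),
        (m j / ‖q i.castSucc - q j‖ ^ 3) • (q i.castSucc - q j))
    (heqx : q k₁.castSucc 0 =
      (∑ j ∈ Finset.univ.filter (· ≠ k₁.castSucc),
        (m j / ‖q k₁.castSucc - q j‖ ^ 3) • (q k₁.castSucc - q j)) 0)
    (hxne : q k₁.castSucc 0 ≠ q (Fin.last n) 0) :
    ∀ i, q i = ∑ j ∈ Finset.univ.filter (· ≠ i), (m j / ‖q i - q j‖ ^ 3) • (q i - q j) := by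
  have hcom : ∑ i, m i • q i = 0 := by
    rw [Fin.sum_univ_castSucc, hlast, smul_smul, mul_neg, mul_inv_cancel₀ (hm _).ne',
      neg_one_smul, add_neg_cancel]
  have hrest : ∀ i, i ≠ k₁.castSucc ∧ i ≠ Fin.last n → ccResidual m q i = 0 := by
    rintro i ⟨hk, hl⟩
    obtain ⟨j, rfl⟩ := Fin.exists_castSucc_eq.mpr hl
    exact (ccResidual_eq_zero_iff m q (hm _).ne').mpr (heq j fun h => hk (congrArg _ h))
  obtain ⟨hr_last, hr_cross⟩ := eq_neg_and_bilin_sub_eq_zero_of_sum_eq_zero q (ccResidual m q)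
    (Fin.castSucc_ne_last k₁) hrest (sum_ccResidual m q hcom)
    (sum_bilin_ccResidual m q planarCross_isAlt)
  have hr_k : ccResidual m q k₁.castSucc = 0 := by
    refine eq_zero_of_planarCross_eq_zero hr_cross (sub_ne_zero.mpr hxne) ?_
    rw [ccResidual, PiLp.smul_apply, PiLp.sub_apply, newtonField, ← heqx, sub_self, smul_zero]
  intro i
  refine (ccResidual_eq_zero_iff m q (hm i).ne').mp ?_
  by_cases hk : i = k₁.castSucc
  · rwa [hk]
  by_cases hl : i = Fin.last n
  · rw [hl, hr_last, hr_k, neg_zero]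
  exact hrest i ⟨hk, hl⟩
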